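/- arXiv:2604.11633 — 3 statements merged into one kernel-verified Lean document; each statement's English description precedes it below -/
import Mathlib

section
/- Let k ≥ 0 be an integer and c > 0 with c > k+1. If z > 0 satisfies z f_k(z)/f_{k+1}(z) = c, then c − (k+1) < z < c. -/
/-!
Peeling off the first term of the tail series gives `z f_k(z) = (k+1) t + z f_{k+1}(z)` with
`t = z^{k+1}/(k+1)!`. Hence the equation reads `(c - z) f_{k+1}(z) = (k+1) t`, and the bounds
follow from `0 < t < f_{k+1}(z)`.
-/

/-- `ftail ℓ z = ∑_{j ≥ ℓ} z^j / j!`, the tail of the exponential series. -/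
noncomputable def ftail (ℓ : ℕ) (z : ℝ) : ℝ := ∑' j : ℕ, z ^ (j + ℓ) / (Nat.factorial (j + ℓ))

lemma ftail_summable (ℓ : ℕ) (z : ℝ) :
    Summable fun j : ℕ => z ^ (j + ℓ) / (Nat.factorial (j + ℓ)) :=
  (summable_nat_add_iff ℓ).2 (Real.summable_pow_div_factorial z)

lemma ftail_pos (ℓ : ℕ) {z : ℝ} (hz : 0 < z) : 0 < ftail ℓ z :=
  (ftail_summable ℓ z).tsum_pos (fun _ => by positivity) 0 (by positivity)

lemma ftail_eq_add_ftail_succ (ℓ : ℕ) (z : ℝ) :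
    ftail ℓ z = z ^ ℓ / (Nat.factorial ℓ) + ftail (ℓ + 1) z := by
  rw [ftail, (ftail_summable ℓ z).tsum_eq_zero_add, zero_add, ftail]
  exact congrArg _ (tsum_congr fun j => by rw [add_right_comm, add_assoc])

lemma pow_div_factorial_lt_ftail (ℓ : ℕ) {z : ℝ} (hz : 0 < z) :
    z ^ ℓ / (Nat.factorial ℓ) < ftail ℓ z := by
  rw [ftail_eq_add_ftail_succ]
  exact lt_add_of_pos_right _ (ftail_pos (ℓ + 1) hz)

lemma mul_ftail_eq (ℓ : ℕ) (z : ℝ) :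
    z * ftail ℓ z
      = (ℓ + 1) * (z ^ (ℓ + 1) / (Nat.factorial (ℓ + 1))) + z * ftail (ℓ + 1) z := by
  rw [ftail_eq_add_ftail_succ, mul_add, Nat.factorial_succ]
  push_cast
  field_simp
  ring

theorem stmt2_general (k : ℕ) (c z : ℝ) (hz : 0 < z)
    (h : z * ftail k z / ftail (k + 1) z = c) :
    c - (k + 1) < z ∧ z < c := by
  set F := ftail (k + 1) z
  set t := z ^ (k + 1) / (Nat.factorial (k + 1) : ℝ)
  have hF : 0 < F := ftail_pos (k + 1) hz
  have ht : 0 < t := by positivity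
  have htF : t < F := pow_div_factorial_lt_ftail (k + 1) hz
  have hcF : (c - z) * F = (k + 1) * t := by
    rw [← h, sub_mul, div_mul_cancel₀ _ hF.ne', mul_ftail_eq]
    ring
  constructor
  · nlinarith
  · nlinarith

/-- if `c > k+1` and `z > 0` satisfies `z f_k(z)/f_{k+1}(z) = c`,
then `c - (k+1) < z < c`. -/
theorem stmt2 (k : ℕ) (c z : ℝ) (hc : (k + 1 : ℝ) < c) (hz : 0 < z)
    (h : z * ftail k z / ftail (k + 1) z = c) :
    c - (k + 1) < z ∧ z < c :=
  stmt2_general k c z hz h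
end

section
/- Let κ ≥ 3 and let φ be an even permutation of [κ] all of whose cycles have odd length. Let R_φ = {τ : τ is a cyclic permutation of [κ] and φ∘τ is also a cyclic permutation of [κ]}. Then (κ−2)! ≤ |R_φ| ≤ (κ−1)!. -/
/-!
We count, more generally, the cycles `τ` with support exactly `s` for which `φ * τ` is again such
a cycle, where `φ` is an even permutation supported in the finite set `s`. For `#s ≥ 3` fix
`z ∈ s`. Left multiplication by `swap z c` cuts `z` out of both cycles `τ` and `φ * τ` when
`τ z = c`, so the `τ` with `τ z = c` correspond to the pairs on `s.erase z` for the even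
permutation `swap z (φ c) * φ * swap z c`. Since `c` can be any point other than `z` and
`φ⁻¹ z`, induction gives at least `(#s - 2) * (#s - 3)! = (#s - 2)!` such `τ`; the base case
`#s = 2` holds because the only even permutation supported on two points is the identity.
The upper bound is the number `(κ - 1)!` of `κ`-cycles.
-/

open Finset

namespace Equiv.Perm

variable {α : Type*} [DecidableEq α]

theorem sameCycle_swap_mul_pow_apply {ρ : Perm α} {z x : α} (hz : ρ z = z) (hzx : z ≠ x) :
    ∀ i : ℕ, (swap z x * ρ).SameCycle x ((ρ ^ i) x)
  | 0 => SameCycle.refl _ _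
  | i + 1 => by
    set w := (ρ ^ i) x
    rw [pow_succ', mul_apply]
    by_cases hwx : ρ w = x
    · rw [hwx]
    have hwz : ρ w ≠ z := by
      rw [← hz, ρ.injective.ne_iff]
      intro hw
      exact hzx ((ρ ^ i).injective (hw.trans (pow_apply_eq_self_of_apply_eq_self hz i).symm)).symm
    refine (sameCycle_swap_mul_pow_apply hz hzx i).trans ⟨1, ?_⟩
    rw [zpow_one, mul_apply, swap_apply_of_ne_of_ne hwz hwx]

variable [Fintype α]

def IsCycleWithSupport (s : Finset α) (τ : Perm α) : Prop :=
  τ.IsCycle ∧ τ.support = s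

theorem IsCycle.apply_apply_ne_self {τ : Perm α} (hτ : τ.IsCycle) (h3 : 3 ≤ #τ.support)
    {z : α} (hz : τ z ≠ z) : τ (τ z) ≠ z := by
  intro h
  rw [hτ.eq_swap_of_apply_apply_eq_self hz h, card_support_swap hz.symm] at h3
  omega

namespace IsCycleWithSupport

variable {s : Finset α} {τ : Perm α}

theorem swap_mul_erase (h : IsCycleWithSupport s τ) (hs : 3 ≤ #s) {z : α} (hz : z ∈ s) :
    IsCycleWithSupport (s.erase z) (swap z (τ z) * τ) := by
  obtain ⟨hτ, rfl⟩ := h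
  have hτz : τ z ≠ z := mem_support.mp hz
  have hττz := hτ.apply_apply_ne_self hs hτz
  exact ⟨hτ.swap_mul hτz hττz, by rw [support_swap_mul_eq _ _ hττz, sdiff_singleton_eq_erase]⟩

theorem swap_mul_insert (h : IsCycleWithSupport s τ) {z x : α} (hz : z ∉ s)
    (hx : x ∈ s) : IsCycleWithSupport (insert z s) (swap z x * τ) := by
  obtain ⟨hτ, rfl⟩ := h
  set σ := swap z x * τ
  have hzx : z ≠ x := fun h => hz (h ▸ hx)
  have hτz : τ z = z := notMem_support.mp hz
  have hτx : τ x ≠ x := mem_support.mp hx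
  have hτxz : τ x ≠ z := fun h => hz (h ▸ apply_mem_support.mpr hx)
  have hσz : σ z = x := by simp [σ, hτz]
  have hσx : σ x = τ x := by simp [σ, swap_apply_of_ne_of_ne hτxz hτx]
  have hsupp : σ.support = insert z τ.support := by
    have hσσz : σ (σ z) ≠ z := by rwa [hσz, hσx]
    have hτ_eq : swap z (σ z) * σ = τ := by rw [hσz, swap_mul_self_mul]
    rw [← hτ_eq, support_swap_mul_eq _ _ hσσz, sdiff_singleton_eq_erase,
      insert_erase (mem_support.mpr (by rw [hσz]; exact hzx.symm))]
  refine ⟨⟨x, by rwa [hσx], fun y hy => ?_⟩, hsupp⟩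
  rcases mem_insert.mp (hsupp ▸ mem_support.mpr hy) with rfl | hy
  · exact SameCycle.symm ⟨1, by simpa using hσz⟩
  · obtain ⟨i, rfl⟩ := (hτ.sameCycle hτx (mem_support.mp hy)).exists_nat_pow_eq
    exact sameCycle_swap_mul_pow_apply hτz hzx i

end IsCycleWithSupport

theorem eq_one_of_sign_eq_one_of_card_support_le_two {φ : Perm α} (hφ : sign φ = 1)
    (h2 : #φ.support ≤ 2) : φ = 1 := by
  by_contra hne
  have hswap : φ.IsSwap :=
    card_support_eq_two.mp (le_antisymm h2 (two_le_card_support_of_ne_one hne))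
  rw [hswap.sign_eq] at hφ
  exact absurd hφ (by decide)

open scoped Classical in
noncomputable def cyclesWithCyclicProduct (s : Finset α) (φ : Perm α) : Finset (Perm α) :=
  {τ | IsCycleWithSupport s τ ∧ IsCycleWithSupport s (φ * τ)}

@[simp]
theorem mem_cyclesWithCyclicProduct {s : Finset α} {φ τ : Perm α} :
    τ ∈ cyclesWithCyclicProduct s φ ↔ IsCycleWithSupport s τ ∧ IsCycleWithSupport s (φ * τ) := by
  simp [cyclesWithCyclicProduct]

section

variable {s : Finset α} {φ : Perm α} {z c : α}

theorem support_swap_mul_mul_swap_subset (hφ : φ.support ⊆ s) (hz : z ∈ s) (hc : c ∈ s) :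
    (swap z (φ c) * φ * swap z c).support ⊆ s.erase z := by
  intro x hx
  rw [mem_support] at hx
  refine mem_erase.mpr ⟨fun hxz => hx (by simp [hxz]), ?_⟩
  by_contra hxs
  have hφc : φ c ∈ s := (isInvariant_of_support_le hφ c).mpr hc
  have hxz : x ≠ z := fun h => hxs (h ▸ hz)
  have hxc : x ≠ c := fun h => hxs (h ▸ hc)
  have hxφc : x ≠ φ c := fun h => hxs (h ▸ hφc)
  apply hx
  rw [mul_apply, mul_apply, swap_apply_of_ne_of_ne hxz hxc,
    notMem_support.mp (fun h => hxs (hφ h)), swap_apply_of_ne_of_ne hxz hxφc]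

theorem card_filter_apply_eq_cyclesWithCyclicProduct_erase (hφ : φ.support ⊆ s) (hs : 3 ≤ #s)
    (hz : z ∈ s) (hc : c ∈ s) (hcz : c ≠ z) (hφc : φ c ≠ z) :
    #{τ ∈ cyclesWithCyclicProduct s φ | τ z = c} =
      #(cyclesWithCyclicProduct (s.erase z) (swap z (φ c) * φ * swap z c)) := by
  refine card_nbij' (swap z c * ·) (swap z c * ·) ?_ ?_ (fun τ _ => swap_mul_self_mul z c τ)
    (fun τ _ => swap_mul_self_mul z c τ)
  · intro τ hτ
    simp only [coe_filter, mem_cyclesWithCyclicProduct, Set.mem_ofPred_eq] at hτ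
    obtain ⟨⟨hτ, hφτ⟩, rfl⟩ := hτ
    have hψ : swap z (φ (τ z)) * φ * swap z (τ z) * (swap z (τ z) * τ) =
        swap z ((φ * τ) z) * (φ * τ) := by
      simp only [mul_assoc, swap_mul_self_mul, mul_apply]
    simp only [mem_coe, mem_cyclesWithCyclicProduct]
    exact ⟨hτ.swap_mul_erase hs hz, hψ ▸ hφτ.swap_mul_erase hs hz⟩
  · intro τ hτ
    simp only [mem_coe, coe_filter, mem_cyclesWithCyclicProduct, Set.mem_ofPred_eq] at hτ ⊢
    obtain ⟨hτ, hψτ⟩ := hτ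
    have hφcs : φ c ∈ s := (isInvariant_of_support_le hφ c).mpr hc
    have hφ_eq : φ * (swap z c * τ) = swap z (φ c) * (swap z (φ c) * φ * swap z c * τ) := by
      simp only [mul_assoc, swap_mul_self_mul]
    have hτz : τ z = z := notMem_support.mp (hτ.2 ▸ notMem_erase z s)
    rw [hφ_eq, ← insert_erase hz]
    exact ⟨⟨hτ.swap_mul_insert (notMem_erase z s) (mem_erase.mpr ⟨hcz, hc⟩),
      hψτ.swap_mul_insert (notMem_erase z s) (mem_erase.mpr ⟨hφc, hφcs⟩)⟩, by simp [hτz]⟩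

theorem one_le_card_cyclesWithCyclicProduct (hs : #s = 2) (hφ : φ.support ⊆ s)
    (hsign : sign φ = 1) : 1 ≤ #(cyclesWithCyclicProduct s φ) := by
  obtain ⟨a, b, hab, rfl⟩ := card_eq_two.mp hs
  have hφ1 : φ = 1 :=
    eq_one_of_sign_eq_one_of_card_support_le_two hsign (hs ▸ card_le_card hφ)
  have hswap : IsCycleWithSupport {a, b} (swap a b) := ⟨isCycle_swap hab, support_swap hab⟩
  exact card_pos.mpr ⟨swap a b, by simpa [hφ1] using hswap⟩

theorem factorial_le_card_cyclesWithCyclicProduct (n : ℕ) (hs : #s = n + 2)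
    (hφ : φ.support ⊆ s) (hsign : sign φ = 1) : n.factorial ≤ #(cyclesWithCyclicProduct s φ) := by
  induction n generalizing s φ with
  | zero => exact one_le_card_cyclesWithCyclicProduct hs hφ hsign
  | succ n ih =>
    obtain ⟨z, hz⟩ := card_pos.mp (show 0 < #s by omega)
    set C := (s.erase z).erase (φ.symm z)
    have hC : n + 1 ≤ #C := by
      have h : #(s.erase z) - 1 ≤ #C := pred_card_le_card_erase
      rw [card_erase_of_mem hz] at h
      omega
    have hfiber : ∀ c ∈ C, n.factorial ≤ #{τ ∈ cyclesWithCyclicProduct s φ | τ z = c} := by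
      intro c hcC
      obtain ⟨hcφ, hcz, hc⟩ : c ≠ φ.symm z ∧ c ≠ z ∧ c ∈ s := by simpa [C] using hcC
      have hφc : φ c ≠ z := fun h => hcφ (φ.eq_symm_apply.mpr h)
      rw [card_filter_apply_eq_cyclesWithCyclicProduct_erase hφ (by omega) hz hc hcz hφc]
      refine ih (by rw [card_erase_of_mem hz, hs]; rfl)
        (support_swap_mul_mul_swap_subset hφ hz hc) ?_
      simp [sign_swap hφc.symm, sign_swap hcz.symm, hsign]
    calc (n + 1).factorial = (n + 1) * n.factorial := Nat.factorial_succ n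
      _ ≤ ∑ c ∈ C, #{τ ∈ cyclesWithCyclicProduct s φ | τ z = c} := by
        rw [← smul_eq_mul]
        exact (card_nsmul_le_sum C _ _ hfiber).trans' (Nat.mul_le_mul_right _ hC)
      _ = #{τ ∈ cyclesWithCyclicProduct s φ | τ z ∈ C} := sum_card_fiberwise_eq_card_filter _ _ _
      _ ≤ #(cyclesWithCyclicProduct s φ) := card_filter_le _ _

end

theorem card_cyclesWithCyclicProduct_univ_le (φ : Perm α) :
    #(cyclesWithCyclicProduct univ φ) ≤ (Fintype.card α - 1).factorial := by
  have hcycleType : ∀ τ ∈ cyclesWithCyclicProduct univ φ, τ.cycleType = {Fintype.card α} := by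
    intro τ hτ
    obtain ⟨⟨hτ, hτs⟩, -⟩ := mem_cyclesWithCyclicProduct.mp hτ
    rw [hτ.cycleType, hτs, card_univ]
  rcases lt_or_ge (Fintype.card α) 2 with hα | hα
  · rw [card_eq_zero.mpr (eq_empty_of_forall_notMem fun τ hτ => ?_)]
    · exact Nat.zero_le _
    have := two_le_of_mem_cycleType (hcycleType τ hτ ▸ Multiset.mem_singleton_self _)
    omega
  · calc #(cyclesWithCyclicProduct univ φ)
        ≤ #({g | g.cycleType = {Fintype.card α}} : Finset (Perm α)) :=
          card_le_card fun τ hτ => mem_filter.mpr ⟨mem_univ τ, hcycleType τ hτ⟩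
      _ = (Fintype.card α - 1).factorial := by
        rw [card_of_cycleType_singleton hα le_rfl, Nat.choose_self, mul_one]

end Equiv.Perm

theorem stmt9_general (κ : ℕ) (hκ : 3 ≤ κ) (φ : Equiv.Perm (Fin κ))
    (heven : Equiv.Perm.sign φ = 1) :
    Nat.factorial (κ - 2) ≤
      ({τ : Equiv.Perm (Fin κ) | (τ.IsCycle ∧ τ.support = Finset.univ) ∧
        ((φ * τ).IsCycle ∧ (φ * τ).support = Finset.univ)} : Set (Equiv.Perm (Fin κ))).ncard ∧
    ({τ : Equiv.Perm (Fin κ) | (τ.IsCycle ∧ τ.support = Finset.univ) ∧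
        ((φ * τ).IsCycle ∧ (φ * τ).support = Finset.univ)} : Set (Equiv.Perm (Fin κ))).ncard ≤
      Nat.factorial (κ - 1) := by
  have hset : {τ : Equiv.Perm (Fin κ) | (τ.IsCycle ∧ τ.support = Finset.univ) ∧
      ((φ * τ).IsCycle ∧ (φ * τ).support = Finset.univ)} =
      ↑(Equiv.Perm.cyclesWithCyclicProduct univ φ) := by
    ext τ
    simp [Equiv.Perm.IsCycleWithSupport]
  rw [hset, Set.ncard_coe_finset]
  have hcard : #(univ : Finset (Fin κ)) = (κ - 2) + 2 := by
    rw [card_univ, Fintype.card_fin]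
    omega
  exact ⟨Equiv.Perm.factorial_le_card_cyclesWithCyclicProduct _ hcard (subset_univ _) heven,
    by simpa using Equiv.Perm.card_cyclesWithCyclicProduct_univ_le φ⟩

/-- if `κ ≥ 3` and `φ` is an even permutation of `[κ]` all of whose cycles have
odd length, then the number of cyclic permutations `τ` of `[κ]` such that `φ∘τ` is also cyclic
lies between `(κ-2)!` and `(κ-1)!`. -/
theorem stmt9 (κ : ℕ) (hκ : 3 ≤ κ) (φ : Equiv.Perm (Fin κ))
    (heven : Equiv.Perm.sign φ = 1)
    (hodd : ∀ i ∈ φ.cycleType, Odd i) :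
    Nat.factorial (κ - 2) ≤
      ({τ : Equiv.Perm (Fin κ) | (τ.IsCycle ∧ τ.support = Finset.univ) ∧
        ((φ * τ).IsCycle ∧ (φ * τ).support = Finset.univ)} : Set (Equiv.Perm (Fin κ))).ncard ∧
    ({τ : Equiv.Perm (Fin κ) | (τ.IsCycle ∧ τ.support = Finset.univ) ∧
        ((φ * τ).IsCycle ∧ (φ * τ).support = Finset.univ)} : Set (Equiv.Perm (Fin κ))).ncard ≤
      Nat.factorial (κ - 1) :=
  stmt9_general κ hκ φ heven
end

section
/- Let κ, s, t be integers with 2 ≤ s ≤ κ and 1 ≤ t ≤ s−1, and let φ be a permutation of [κ]. Fix a cyclic permutation τ with φ∘τ cyclic, and fix a set of t 'agreeing' values. Then the number of cyclic permutations τ' of [κ] such that φ∘τ' is cyclic and τ' agrees with τ on a prescribed set of t points is at most (κ − t − 1)!. -/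
/-!
If a cycle `σ` is known to send `a` to `f a`, contracting the edge `a ↦ f a`, i.e. passing to
`swap a (f a) * σ`, is injective and yields a cycle on one point fewer that is still known on `A`.
Contracting all points of `A` in the support reduces the count to cycles on the `m` free
points; for these, fixing the image of one point and contracting again gives
`(m - 1) · (m - 2)! = (m - 1)!`.
-/

open Equiv Finset

namespace Equiv.Perm

open Nat

variable {α : Type*} [Fintype α] [DecidableEq α]

open scoped Classical in
noncomputable def cyclesExtending (S A : Finset α) (f : α → α) : Finset (Perm α) :=
  {σ | σ.IsCycle ∧ σ.support = S ∧ ∀ a ∈ A, σ a = f a}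

variable {S A : Finset α} {f : α → α} {σ : Perm α}

theorem mem_cyclesExtending :
    σ ∈ cyclesExtending S A f ↔ σ.IsCycle ∧ σ.support = S ∧ ∀ a ∈ A, σ a = f a := by
  simp [cyclesExtending]

theorem IsCycle.apply_apply_eq_self_of_card_support_le_two (hσ : σ.IsCycle)
    (h : #σ.support ≤ 2) (x : α) : σ (σ x) = x := by
  have hsq : σ ^ 2 = 1 := by
    rw [← hσ.orderOf.trans (h.antisymm hσ.two_le_card_support), pow_orderOf_eq_one]
  rw [← mul_apply, ← sq, hsq, one_apply]

theorem IsCycle.apply_apply_ne_self_of_two_lt_card_support (hσ : σ.IsCycle)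
    (h : 2 < #σ.support) {x : α} (hx : x ∈ σ.support) : σ (σ x) ≠ x := by
  intro hxx
  rw [hσ.eq_swap_of_apply_apply_eq_self (mem_support.1 hx) hxx,
    card_support_swap (mem_support.1 hx).symm] at h
  exact lt_irrefl _ h

theorem cyclesExtending_subset_singleton {a : α} (haS : a ∈ S) (haA : a ∈ A) (hS : #S ≤ 2) :
    cyclesExtending S A f ⊆ {swap a (f a)} := by
  intro σ hσ
  obtain ⟨hcyc, rfl, hagree⟩ := mem_cyclesExtending.1 hσ
  rw [mem_singleton, ← hagree a haA]
  exact hcyc.eq_swap_of_apply_apply_eq_self (mem_support.1 haS)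
    (hcyc.apply_apply_eq_self_of_card_support_le_two hS a)

theorem swap_mul_mem_cyclesExtending_erase {a : α} (haS : a ∈ S) (haA : a ∈ A) (hS : 2 < #S)
    (hσ : σ ∈ cyclesExtending S A f) :
    swap a (f a) * σ ∈ cyclesExtending (S.erase a) A (swap a (f a) ∘ f) := by
  obtain ⟨hcyc, rfl, hagree⟩ := mem_cyclesExtending.1 hσ
  have hσσa := hcyc.apply_apply_ne_self_of_two_lt_card_support hS haS
  rw [← hagree a haA]
  refine mem_cyclesExtending.2 ⟨hcyc.swap_mul (mem_support.1 haS) hσσa, ?_, ?_⟩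
  · rw [support_swap_mul_eq _ _ hσσa, sdiff_singleton_eq_erase]
  · intro x hx
    rw [mul_apply, hagree x hx, hagree a haA, Function.comp_apply]

theorem card_cyclesExtending_le_of_mem {a : α} (haS : a ∈ S) (haA : a ∈ A)
    (ih : ∀ g : α → α, #(cyclesExtending (S.erase a) A g) ≤ (#(S.erase a \ A) - 1)!) :
    #(cyclesExtending S A f) ≤ (#(S \ A) - 1)! := by
  rcases le_or_gt #S 2 with hS | hS
  · calc #(cyclesExtending S A f) ≤ #{swap a (f a)} :=
          card_le_card (cyclesExtending_subset_singleton haS haA hS)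
      _ ≤ (#(S \ A) - 1)! := by rw [card_singleton]; exact Nat.factorial_pos _
  · have hsdiff : S.erase a \ A = S \ A := by
      ext x; by_cases hx : x = a <;> simp_all
    calc #(cyclesExtending S A f)
        ≤ #(cyclesExtending (S.erase a) A (swap a (f a) ∘ f)) :=
          card_le_card_of_injOn (swap a (f a) * ·)
            (fun σ hσ ↦ swap_mul_mem_cyclesExtending_erase haS haA hS hσ)
            (mul_right_injective _).injOn
      _ ≤ (#(S \ A) - 1)! := hsdiff ▸ ih _

theorem cyclesExtending_subset_biUnion {a : α} (haS : a ∈ S) :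
    cyclesExtending S A f ⊆
      (S.erase a).biUnion fun c ↦ cyclesExtending S (insert a A) (Function.update f a c) := by
  intro σ hσ
  obtain ⟨hcyc, rfl, hagree⟩ := mem_cyclesExtending.1 hσ
  refine mem_biUnion.2 ⟨σ a, mem_erase.2 ⟨mem_support.1 haS, apply_mem_support.2 haS⟩,
    mem_cyclesExtending.2 ⟨hcyc, rfl, fun x hx ↦ ?_⟩⟩
  rcases eq_or_ne x a with rfl | hxa
  · rw [Function.update_self]
  · rw [Function.update_of_ne hxa, hagree x ((mem_insert.1 hx).resolve_left hxa)]

theorem card_cyclesExtending_le (S A : Finset α) (f : α → α) :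
    #(cyclesExtending S A f) ≤ (#(S \ A) - 1)! := by
  induction S using Finset.strongInduction generalizing A f with
  | H S ih =>
  by_cases hSA : ∃ a ∈ S, a ∈ A
  · obtain ⟨a, haS, haA⟩ := hSA
    exact card_cyclesExtending_le_of_mem haS haA (ih _ (erase_ssubset haS) A)
  push Not at hSA
  rcases S.eq_empty_or_nonempty with rfl | ⟨a, haS⟩
  · refine (card_le_one.2 fun σ hσ ρ hρ ↦ ?_).trans (factorial_pos _)
    simp only [mem_cyclesExtending, support_eq_empty_iff] at hσ hρ
    rw [hσ.2.1, hρ.2.1]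
  have hsdiff : S \ A = S := sdiff_eq_self_of_disjoint (disjoint_left.2 hSA)
  have hsdiff' : S \ insert a A = S.erase a := by rw [sdiff_insert, hsdiff]
  calc #(cyclesExtending S A f)
      ≤ ∑ c ∈ S.erase a, #(cyclesExtending S (insert a A) (Function.update f a c)) :=
        (card_le_card (cyclesExtending_subset_biUnion haS)).trans card_biUnion_le
    _ ≤ ∑ c ∈ S.erase a, (#(S.erase a) - 1)! := by
        refine sum_le_sum fun c _ ↦ ?_
        rw [← hsdiff']
        exact card_cyclesExtending_le_of_mem haS (mem_insert_self a A)
          (ih _ (erase_ssubset haS) _)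
    _ ≤ (#(S \ A) - 1)! := by
        rw [sum_const, smul_eq_mul, hsdiff, ← card_erase_of_mem haS]
        rcases eq_or_ne #(S.erase a) 0 with h | h
        · simp [h]
        · exact (mul_factorial_pred h).le

end Equiv.Perm

theorem stmt18_general (κ t : ℕ)
    (φ τ : Equiv.Perm (Fin κ))
    (A : Finset (Fin κ)) (hA : A.card = t) :
    ({τ' : Equiv.Perm (Fin κ) | (τ'.IsCycle ∧ τ'.support = Finset.univ) ∧
        ((φ * τ').IsCycle ∧ (φ * τ').support = Finset.univ) ∧
        ∀ a ∈ A, τ' a = τ a} : Set (Equiv.Perm (Fin κ))).ncard ≤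
      Nat.factorial (κ - t - 1) :=
  calc _ ≤ (Perm.cyclesExtending univ A τ : Set (Perm (Fin κ))).ncard :=
        Set.ncard_le_ncard fun σ hσ ↦ Perm.mem_cyclesExtending.2 ⟨hσ.1.1, hσ.1.2, hσ.2.2⟩
    _ ≤ (#(univ \ A) - 1).factorial :=
        (Set.ncard_coe_finset _).trans_le (Perm.card_cyclesExtending_le _ _ _)
    _ = (κ - t - 1).factorial := by rw [card_univ_sdiff, Fintype.card_fin, hA]

/-- let `2 ≤ s ≤ κ`, `1 ≤ t ≤ s−1`, `φ` a permutation of `[κ]`, `τ` a cyclic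
permutation with `φ∘τ` cyclic, and `A` a set of `t` prescribed points. Then the number of
cyclic permutations `τ'` with `φ∘τ'` cyclic that agree with `τ` on `A` is at most `(κ−t−1)!`. -/
theorem stmt18 (κ s t : ℕ) (hs2 : 2 ≤ s) (hsκ : s ≤ κ) (ht1 : 1 ≤ t) (hts : t ≤ s - 1)
    (φ τ : Equiv.Perm (Fin κ))
    (hτ : τ.IsCycle ∧ τ.support = Finset.univ)
    (hφτ : (φ * τ).IsCycle ∧ (φ * τ).support = Finset.univ)
    (A : Finset (Fin κ)) (hA : A.card = t) :
    ({τ' : Equiv.Perm (Fin κ) | (τ'.IsCycle ∧ τ'.support = Finset.univ) ∧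
        ((φ * τ').IsCycle ∧ (φ * τ').support = Finset.univ) ∧
        ∀ a ∈ A, τ' a = τ a} : Set (Equiv.Perm (Fin κ))).ncard ≤
      Nat.factorial (κ - t - 1) :=
  stmt18_general κ t φ τ A hA
end
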